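/- Let A ∈ ℝ^{n×n}, b ∈ ℝⁿ, x₀ ∈ ℝⁿ with r₀ = b − A x₀, let U ∈ ℝ^{n×k} with C = A U having orthonormal columns, and let Φ = C Cᵀ, Π = U (Uᵀ Aᵀ A U)⁻¹ Uᵀ Aᵀ A. Then for any t ∈ ℝⁿ, the full residual satisfies b − A(x₀ + Π η₀ + (I − Π) t) = (I − Φ)(r₀ − A t), where η₀ solves A η₀ = r₀ (A invertible). -/
import Mathlib

open Matrix

theorem stmt14 {n k : ℕ} (A : Matrix (Fin n) (Fin n) ℝ) (hA : IsUnit A.det)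
    (b x₀ : Fin n → ℝ) (U : Matrix (Fin n) (Fin k) ℝ)
    (hC : (A * U)ᵀ * (A * U) = 1)
    (η₀ : Fin n → ℝ) (hη : A.mulVec η₀ = b - A.mulVec x₀) :
    letI r₀ := b - A.mulVec x₀
    letI C := A * U
    letI Φ := C * Cᵀ
    letI P := U * (Uᵀ * Aᵀ * A * U)⁻¹ * Uᵀ * Aᵀ * A
    ∀ t : Fin n → ℝ,
      b - A.mulVec (x₀ + P.mulVec η₀ + (1 - P).mulVec t) =
        (1 - Φ).mulVec (r₀ - A.mulVec t) := by
  intro t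
  set P := U * (Uᵀ * Aᵀ * A * U)⁻¹ * Uᵀ * Aᵀ * A with hP
  set Φ := (A * U) * (A * U)ᵀ with hΦ
  have h1 : Uᵀ * Aᵀ * A * U = 1 := by
    simpa [Matrix.transpose_mul, Matrix.mul_assoc] using hC
  have hAP : A * P = Φ * A := by
    rw [hP, h1, inv_one, hΦ]
    simp [Matrix.transpose_mul, Matrix.mul_assoc]
  have hAP' : A * (1 - P) = (1 - Φ) * A := by
    rw [mul_sub, sub_mul, mul_one, one_mul, hAP]
  have e1 : A.mulVec (P.mulVec η₀) = Φ.mulVec (b - A.mulVec x₀) := by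
    rw [Matrix.mulVec_mulVec, hAP, ← Matrix.mulVec_mulVec, hη]
  have e2 : A.mulVec ((1 - P).mulVec t) = (1 - Φ).mulVec (A.mulVec t) := by
    rw [Matrix.mulVec_mulVec, hAP', ← Matrix.mulVec_mulVec]
  rw [Matrix.mulVec_add, Matrix.mulVec_add, e1, e2]
  simp only [Matrix.mulVec_sub, Matrix.sub_mulVec, Matrix.one_mulVec]
  abel
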